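/- For 1<p<∞ and the map V(z)=|z|^{(p-2)/2} z on ℝ^n, there exists a constant c>0 depending only on p and n such that for all z₁,z₂∈ℝ^n: c|V(z₁)-V(z₂)|² + p|z₁|^{p-2} z₁·(z₂-z₁) ≤ |z₂|^p - |z₁|^p. -/

import Mathlib

open scoped RealInnerProductSpace

noncomputable abbrev E (n : ℕ) := EuclideanSpace ℝ (Fin n)

/-- The auxiliary map `V(z) = |z|^((p-2)/2) z`. -/
noncomputable def V (p : ℝ) {n : ℕ} (z : E n) : E n := ‖z‖ ^ ((p - 2) / 2) • z

section Aux
open Real Set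

lemma hsq {p : ℝ} {x : ℝ} (hx : 0 ≤ x) : (x ^ (p/2)) ^ 2 = x ^ p := by
  rw [← Real.rpow_natCast (x ^ (p/2)) 2, ← Real.rpow_mul hx]; norm_num

lemma rpadd {x : ℝ} (h : 0 < x) (a b : ℝ) : x ^ a * x ^ b = x ^ (a+b) :=
  (Real.rpow_add h a b).symm

-- inequality I for p ≥ 2, constant 1
lemma ineqA {p : ℝ} (hp2 : 2 ≤ p) {a b : ℝ} (ha : 0 ≤ a) (hb : 0 ≤ b) :
    (a ^ (p/2) - b ^ (p/2)) ^ 2 ≤ b ^ p + (p-1) * a ^ p - p * a ^ (p-1) * b := by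
  have hp1 : (1:ℝ) < p := by linarith
  rcases eq_or_lt_of_le ha with h | h
  · rw [← h, Real.zero_rpow (by positivity : p/2 ≠ 0),
      Real.zero_rpow (by linarith : p - 1 ≠ 0), Real.zero_rpow (by positivity : p ≠ 0)]
    have := hsq (p := p) hb
    nlinarith [this]
  · -- a > 0, Bernoulli with s = b/a - 1
    have hs : -1 ≤ b / a - 1 := by
      have : 0 ≤ b / a := div_nonneg hb h.le
      linarith
    have hbern := one_add_mul_self_le_rpow_one_add hs (by linarith : (1:ℝ) ≤ p/2)
    rw [add_sub_cancel] at hbern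
    -- (b/a)^(p/2) = b^(p/2) / a^(p/2)
    have hdiv : (b / a) ^ (p/2) = b ^ (p/2) / a ^ (p/2) := Real.div_rpow hb h.le _
    have hap : (0:ℝ) < a ^ (p/2) := Real.rpow_pos_of_pos h _
    have hApos : (0:ℝ) < a ^ p := Real.rpow_pos_of_pos h _
    -- multiply Bernoulli by 2 a^p
    have key : 2 * a ^ p + p * (a ^ (p-1) * b - a ^ p) ≤ 2 * (a ^ (p/2) * b ^ (p/2)) := by
      have h1 : a ^ p * (b / a) = a ^ (p-1) * b := by
        rw [mul_div_assoc', mul_comm, mul_div_assoc, ← Real.rpow_sub_one h.ne']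
        ring
      have h2 : a ^ p * (b / a) ^ (p/2) = a ^ (p/2) * b ^ (p/2) := by
        rw [hdiv, ← hsq (p := p) ha]
        field_simp
      nlinarith [hbern, h1, h2, hApos]
    have e1 := hsq (p := p) ha
    have e2 := hsq (p := p) hb
    nlinarith [key, e1, e2]

-- Φ monotone on [1,∞): r^p + (p-1) - p r - c (r^(p/2)-1)^2 with c = (p-1)/2
lemma ineqC {p : ℝ} (hp : 1 < p) (hp2 : p < 2) {r : ℝ} (hr : 1 ≤ r) :
    (p-1)/2 * (r ^ (p/2) - 1) ^ 2 ≤ r ^ p + (p-1) - p * r := by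
  set c : ℝ := (p-1)/2 with hc
  have hc0 : 0 < c := by rw [hc]; linarith
  have hc1 : c < 1/2 := by rw [hc]; linarith
  set Φ : ℝ → ℝ := fun x => x ^ p + (p-1) - p * x - c * (x ^ (p/2) - 1) ^ 2 with hΦ
  set Φ' : ℝ → ℝ := fun x => p * x ^ (p-1) - p - c * (2 * (x ^ (p/2) - 1) * (p/2 * x ^ (p/2-1))) with hΦ'
  have hderiv : ∀ x : ℝ, 0 < x → HasDerivAt Φ (Φ' x) x := by
    intro x hx
    have h1 : HasDerivAt (fun y : ℝ => y ^ p) (p * x ^ (p-1)) x :=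
      Real.hasDerivAt_rpow_const (Or.inl hx.ne')
    have h2 : HasDerivAt (fun y : ℝ => y ^ (p/2)) (p/2 * x ^ (p/2-1)) x :=
      Real.hasDerivAt_rpow_const (Or.inl hx.ne')
    have h3 : HasDerivAt (fun y : ℝ => (y ^ (p/2) - 1) ^ 2)
        (2 * (x ^ (p/2) - 1) * (p/2 * x ^ (p/2-1))) x := by
      have := ((h2.sub_const 1).fun_pow 2)
      simpa using this
    have h4 := ((h1.add_const (p-1)).sub ((hasDerivAt_id x).const_mul p)).sub (h3.const_mul c)
    exact h4.congr_deriv (by ring)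
  have hmono : MonotoneOn Φ (Ici 1) := by
    apply monotoneOn_of_deriv_nonneg (convex_Ici 1)
    · intro x hx
      exact (hderiv x (by simp at hx; linarith)).continuousAt.continuousWithinAt
    · intro x hx
      rw [interior_Ici] at hx
      exact (hderiv x (by simp at hx; linarith)).differentiableAt.differentiableWithinAt
    · intro x hx
      rw [interior_Ici] at hx
      have hx1 : (1:ℝ) < x := hx
      have hx0 : (0:ℝ) < x := by linarith
      rw [(hderiv x hx0).deriv]
      -- Φ' x = p * ((1-c) x^(p-1) + c x^(p/2-1) - 1)
      have hmul : x ^ (p/2) * x ^ (p/2-1) = x ^ (p-1) := by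
        rw [← Real.rpow_add hx0]; congr 1; ring
      have hamgm := Real.geom_mean_le_arith_mean2_weighted (by linarith : (0:ℝ) ≤ 1 - c)
        (le_of_lt hc0) (le_of_lt (Real.rpow_pos_of_pos hx0 (p-1)))
        (le_of_lt (Real.rpow_pos_of_pos hx0 (p/2-1))) (by ring)
      have hpow : (x ^ (p-1)) ^ (1-c) * (x ^ (p/2-1)) ^ c = x ^ ((p-1)*(1-c) + (p/2-1)*c) := by
        rw [← Real.rpow_mul (le_of_lt hx0), ← Real.rpow_mul (le_of_lt hx0),
          ← Real.rpow_add hx0]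
      have hge1 : (1:ℝ) ≤ x ^ ((p-1)*(1-c) + (p/2-1)*c) := by
        have he : 0 ≤ (p-1)*(1-c) + (p/2-1)*c := by rw [hc]; nlinarith
        calc (1:ℝ) = x ^ (0:ℝ) := (Real.rpow_zero x).symm
        _ ≤ x ^ ((p-1)*(1-c) + (p/2-1)*c) :=
          Real.rpow_le_rpow_of_exponent_le (by linarith) he
      rw [hpow] at hamgm
      show (0:ℝ) ≤ p * x ^ (p-1) - p - c * (2 * (x ^ (p/2) - 1) * (p/2 * x ^ (p/2-1)))
      have hrw : p * x ^ (p-1) - p - c * (2 * (x ^ (p/2) - 1) * (p/2 * x ^ (p/2-1)))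
          = p * ((1-c) * x ^ (p-1) + c * x ^ (p/2-1) - 1) := by
        linear_combination (-(c*p)) * hmul
      rw [hrw]
      have hS := le_trans hge1 hamgm
      nlinarith [hS, hp]
  have h0 : Φ 1 = 0 := by
    rw [hΦ]; simp
  have := hmono (by simp : (1:ℝ) ∈ Ici 1) (by simpa using hr) hr
  rw [h0] at this
  rw [hΦ] at this
  simp only at this
  linarith

lemma ineqB {p : ℝ} (hp : 1 < p) (hp2 : p < 2) {r : ℝ} (hr0 : 0 ≤ r) (hr1 : r ≤ 1) :
    (p-1)/2 * (1 - r ^ (p/2)) ^ 2 ≤ r ^ p + (p-1) - p * r := by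
  set c : ℝ := (p-1)/2 with hc
  have hc0 : 0 < c := by rw [hc]; linarith
  -- step 2 : (1 - r^(p/2))^2 ≤ (1-r)^2
  have hmid : (1 - r ^ (p/2)) ^ 2 ≤ (1 - r) ^ 2 := by
    rcases eq_or_lt_of_le hr0 with h | h
    · rw [← h, Real.zero_rpow (by positivity : p/2 ≠ 0)]
    · have h1 : r ≤ r ^ (p/2) := by
        have := Real.rpow_le_rpow_of_exponent_ge h hr1 (by linarith : p/2 ≤ 1)
        rwa [Real.rpow_one] at this
      have h2 : r ^ (p/2) ≤ 1 := Real.rpow_le_one (le_of_lt h) hr1 (by positivity)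
      nlinarith [h1, h2]
  -- step 1 : K(r) ≥ 0 on [0,1]
  set K : ℝ → ℝ := fun x => x ^ p + (p-1) - p * x - c * (1 - x) ^ 2 with hK
  set K' : ℝ → ℝ := fun x => p * x ^ (p-1) - p + c * (2 * (1 - x)) with hK'
  have hderiv : ∀ x : ℝ, 0 < x → HasDerivAt K (K' x) x := by
    intro x hx
    have h1 : HasDerivAt (fun y : ℝ => y ^ p) (p * x ^ (p-1)) x :=
      Real.hasDerivAt_rpow_const (Or.inl hx.ne')
    have h3 : HasDerivAt (fun y : ℝ => (1 - y) ^ 2) (2 * (1 - x) * (-1)) x := by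
      have := ((hasDerivAt_id x).const_sub 1).fun_pow 2
      simpa using this
    have h4 := ((h1.add_const (p-1)).sub ((hasDerivAt_id x).const_mul p)).sub (h3.const_mul c)
    exact h4.congr_deriv (by ring)
  have hcont : ContinuousOn K (Icc 0 1) := by
    intro x hx
    have hxp : ContinuousAt (fun y : ℝ => y ^ p) x :=
      Real.continuousAt_rpow_const x p (Or.inr (by linarith))
    exact ((((hxp.add continuousAt_const).sub (continuousAt_const.mul continuousAt_id)).sub
      (continuousAt_const.mul (((continuousAt_const.sub continuousAt_id).pow 2))))).continuousWithinAt
  have hanti : AntitoneOn K (Icc 0 1) := by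
    apply antitoneOn_of_deriv_nonpos (convex_Icc 0 1) hcont
    · intro x hx
      rw [interior_Icc] at hx
      exact (hderiv x hx.1).differentiableAt.differentiableWithinAt
    · intro x hx
      rw [interior_Icc] at hx
      obtain ⟨hxa, hxb⟩ := hx
      rw [(hderiv x hxa).deriv]
      show p * x ^ (p-1) - p + c * (2 * (1 - x)) ≤ 0
      have hbern : x ^ (p-1) ≤ 1 + (p-1) * (x - 1) := by
        have := rpow_one_add_le_one_add_mul_self (by linarith : (-1:ℝ) ≤ x - 1)
          (by linarith : (0:ℝ) ≤ p - 1) (by linarith : p - 1 ≤ 1)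
        rwa [add_sub_cancel] at this
      have h5 := mul_le_mul_of_nonneg_left hbern (by linarith : (0:ℝ) ≤ p)
      have h6 : (0:ℝ) ≤ (p-1)^2 * (1 - x) := by nlinarith [sq_nonneg (p-1)]
      rw [hc]
      nlinarith [h5, h6]
  have hK1 : K 1 = 0 := by rw [hK]; simp
  have := hanti (mem_Icc.mpr ⟨hr0, hr1⟩) (mem_Icc.mpr ⟨zero_le_one, le_refl 1⟩) hr1
  rw [hK1] at this
  rw [hK] at this
  simp only at this
  nlinarith [hmid, hc0, this]

lemma ineqI {p : ℝ} (hp : 1 < p) {a b : ℝ} (ha : 0 ≤ a) (hb : 0 ≤ b) :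
    min (1/2) ((p-1)/2) * (a ^ (p/2) - b ^ (p/2)) ^ 2
      ≤ b ^ p + (p-1) * a ^ p - p * a ^ (p-1) * b := by
  have hmin1 : min (1/2) ((p-1)/2) ≤ 1/2 := min_le_left _ _
  have hmin2 : min (1/2) ((p-1)/2) ≤ (p-1)/2 := min_le_right _ _
  have hmin0 : 0 ≤ min (1/2) ((p-1)/2) := le_min (by norm_num) (by linarith)
  rcases le_or_gt 2 p with h2 | h2
  · have hA := ineqA h2 ha hb
    nlinarith [sq_nonneg (a ^ (p/2) - b ^ (p/2))]
  · rcases eq_or_lt_of_le ha with h | h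
    · rw [← h, Real.zero_rpow (by positivity : p/2 ≠ 0),
        Real.zero_rpow (by positivity : p ≠ 0),
        Real.zero_rpow (by linarith : p - 1 ≠ 0)]
      have hb2 := hsq (p := p) hb
      have hbp : 0 ≤ b ^ p := Real.rpow_nonneg hb p
      nlinarith [hb2, hbp]
    · set r : ℝ := b / a with hrdef
      have hr0 : 0 ≤ r := div_nonneg hb (le_of_lt h)
      have hApos : (0:ℝ) < a ^ p := Real.rpow_pos_of_pos h _
      have key : (p-1)/2 * (r ^ (p/2) - 1) ^ 2 ≤ r ^ p + (p-1) - p * r := by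
        rcases le_or_gt r 1 with hr1 | hr1
        · have hB := ineqB hp h2 hr0 hr1
          have hsw : (r ^ (p/2) - 1) ^ 2 = (1 - r ^ (p/2)) ^ 2 := by ring
          rw [hsw]; exact hB
        · exact ineqC hp h2 (le_of_lt hr1)
      have hmul := mul_le_mul_of_nonneg_left key (le_of_lt hApos)
      have e1 : a ^ p * r ^ p = b ^ p := by
        rw [hrdef, Real.div_rpow hb (le_of_lt h)]
        field_simp
      have e2 : a ^ p * r = a ^ (p-1) * b := by
        rw [hrdef, mul_div_assoc', mul_comm, mul_div_assoc, ← Real.rpow_sub_one h.ne']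
        ring
      have e3 : a ^ p * (r ^ (p/2) - 1) ^ 2 = (b ^ (p/2) - a ^ (p/2)) ^ 2 := by
        have ha2 := hsq (p := p) (le_of_lt h)
        have hcross : a ^ (p/2) * r ^ (p/2) = b ^ (p/2) := by
          rw [hrdef, Real.div_rpow hb (le_of_lt h)]
          field_simp
        rw [← hcross, ← ha2]; ring
      have hmul2 : (p-1)/2 * ((b ^ (p/2) - a ^ (p/2)) ^ 2)
          ≤ b ^ p + (p-1) * a ^ p - p * (a ^ (p-1) * b) := by
        calc (p-1)/2 * ((b ^ (p/2) - a ^ (p/2)) ^ 2)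
            = a ^ p * ((p-1)/2 * (r ^ (p/2) - 1) ^ 2) := by rw [← e3]; ring
          _ ≤ a ^ p * (r ^ p + (p-1) - p * r) := hmul
          _ = b ^ p + (p-1) * a ^ p - p * (a ^ (p-1) * b) := by rw [← e1, ← e2]; ring
      have hfin : min (1/2) ((p-1)/2) * (a ^ (p/2) - b ^ (p/2)) ^ 2
          ≤ (p-1)/2 * ((b ^ (p/2) - a ^ (p/2)) ^ 2) := by
        have hswap : (a ^ (p/2) - b ^ (p/2)) ^ 2 = (b ^ (p/2) - a ^ (p/2)) ^ 2 := by ring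
        rw [hswap]
        exact mul_le_mul_of_nonneg_right hmin2 (sq_nonneg _)
      linarith

lemma ineqII {p : ℝ} (hp : 1 < p) {a b : ℝ} (ha : 0 ≤ a) (hb : 0 ≤ b) :
    min (1/2) ((p-1)/2) * (a ^ (p/2) + b ^ (p/2)) ^ 2
      ≤ b ^ p + (p-1) * a ^ p + p * a ^ (p-1) * b := by
  set c : ℝ := min (1/2) ((p-1)/2) with hc
  have hc1 : c ≤ 1/2 := min_le_left _ _
  have hc2 : c ≤ (p-1)/2 := min_le_right _ _
  have hc0 : 0 ≤ c := le_min (by norm_num) (by linarith)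
  have hA : 0 ≤ a ^ p := Real.rpow_nonneg ha p
  have hB : 0 ≤ b ^ p := Real.rpow_nonneg hb p
  have h1 : (a ^ (p/2) + b ^ (p/2)) ^ 2 ≤ 2 * (a ^ p + b ^ p) := by
    nlinarith [sq_nonneg (a ^ (p/2) - b ^ (p/2)), hsq (p := p) ha, hsq (p := p) hb]
  have h2 : 0 ≤ p * a ^ (p-1) * b :=
    mul_nonneg (mul_nonneg (by linarith) (Real.rpow_nonneg ha _)) hb
  have k1 := mul_le_mul_of_nonneg_left h1 hc0
  have k2 : (2*c) * a ^ p ≤ (p-1) * a ^ p := mul_le_mul_of_nonneg_right (by linarith) hA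
  have k3 : (2*c) * b ^ p ≤ 1 * b ^ p := mul_le_mul_of_nonneg_right (by linarith) hB
  nlinarith [k1, k2, k3, h2]

lemma id2 {p : ℝ} (hp : 1 < p) {x : ℝ} (hx : 0 ≤ x) : x ^ (p-2) * x = x ^ (p-1) := by
  rcases eq_or_lt_of_le hx with h | h
  · rw [← h, Real.zero_rpow (by linarith : p - 1 ≠ 0), mul_zero]
  · have := rpadd h (p-2) 1
    rw [Real.rpow_one] at this
    rw [this]; congr 1; ring

lemma id3 {p : ℝ} (hp : 0 < p) {x : ℝ} (hx : 0 ≤ x) : x ^ ((p-2)/2) * x = x ^ (p/2) := by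
  rcases eq_or_lt_of_le hx with h | h
  · rw [← h, mul_zero, Real.zero_rpow (by positivity : p/2 ≠ 0)]
  · have := rpadd h ((p-2)/2) 1
    rw [Real.rpow_one] at this
    rw [this]; congr 1; ring

lemma id1 {p : ℝ} (hp : 0 < p) {x : ℝ} (hx : 0 ≤ x) : x ^ (p-2) * x ^ (2:ℕ) = x ^ p := by
  rcases eq_or_lt_of_le hx with h | h
  · rw [← h, Real.zero_rpow hp.ne', pow_two, mul_zero, mul_zero]
  · rw [← Real.rpow_natCast x 2, rpadd h]
    congr 1; ring

lemma scalar_main {p : ℝ} (hp : 1 < p) {a b s : ℝ} (ha : 0 ≤ a) (hb : 0 ≤ b)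
    (hs : |s| ≤ a * b) :
    min (1/2) ((p-1)/2) * (a ^ p + b ^ p - 2 * (a ^ ((p-2)/2) * b ^ ((p-2)/2)) * s)
        + p * a ^ (p-2) * (s - a ^ (2:ℕ))
      ≤ b ^ p - a ^ p := by
  have hp0 : (0:ℝ) < p := by linarith
  set c : ℝ := min (1/2) ((p-1)/2) with hc
  set A : ℝ := p * a ^ (p-2) - 2 * c * (a ^ ((p-2)/2) * b ^ ((p-2)/2)) with hA
  have hAs : A * s ≤ |A| * (a * b) := by
    calc A * s ≤ |A * s| := le_abs_self _
      _ = |A| * |s| := abs_mul _ _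
      _ ≤ |A| * (a * b) := mul_le_mul_of_nonneg_left hs (abs_nonneg A)
  clear_value c A
  have hkey : A * s ≤ (1 - c) * b ^ p + (p - 1 - c) * a ^ p := by
    have hAab : A * (a * b)
        = p * a ^ (p-1) * b - 2 * c * (a ^ (p/2) * b ^ (p/2)) := by
      have i2 := id2 hp ha
      have i3a := id3 hp0 ha
      have i3b := id3 hp0 hb
      calc A * (a * b)
          = p * (a ^ (p-2) * a) * b - 2 * c * ((a ^ ((p-2)/2) * a) * (b ^ ((p-2)/2) * b)) := by
            rw [hA]; ring
        _ = p * a ^ (p-1) * b - 2 * c * (a ^ (p/2) * b ^ (p/2)) := by rw [i2, i3a, i3b]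
    rcases le_or_gt 0 A with hA0 | hA0
    · have h1 : A * s ≤ A * (a * b) := by rwa [abs_of_nonneg hA0] at hAs
      have h2 := ineqI hp ha hb
      rw [← hc] at h2
      have ea' : c * (a ^ (p/2)) ^ 2 = c * a ^ p := by rw [hsq (p := p) ha]
      have eb' : c * (b ^ (p/2)) ^ 2 = c * b ^ p := by rw [hsq (p := p) hb]
      linarith [h1, h2, ea', eb', hAab]
    · have h1 : A * s ≤ -A * (a * b) := by rwa [abs_of_neg hA0] at hAs
      have h2 := ineqII hp ha hb
      rw [← hc] at h2
      have ea' : c * (a ^ (p/2)) ^ 2 = c * a ^ p := by rw [hsq (p := p) ha]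
      have eb' : c * (b ^ (p/2)) ^ 2 = c * b ^ p := by rw [hsq (p := p) hb]
      linarith [h1, h2, ea', eb', hAab]
  have i1 := id1 hp0 ha
  have expand : c * (a ^ p + b ^ p - 2 * (a ^ ((p-2)/2) * b ^ ((p-2)/2)) * s)
      + p * a ^ (p-2) * (s - a ^ (2:ℕ))
      = A * s + c * (a ^ p + b ^ p) - p * a ^ p := by
    rw [hA]
    linear_combination (-(p:ℝ)) * i1
  rw [expand]
  linarith [hkey]

end Aux

open Real Set

/-- Strict monotonicity inequality for the map `V`. -/
theorem V_strict_monotonicity (n : ℕ) (p : ℝ) (hp : 1 < p) :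
    ∃ c > 0, ∀ z₁ z₂ : E n,
      c * ‖V p z₁ - V p z₂‖ ^ (2 : ℝ) + p * ‖z₁‖ ^ (p - 2) * (inner ℝ z₁ (z₂ - z₁) : ℝ)
        ≤ ‖z₂‖ ^ p - ‖z₁‖ ^ p := by
  have hp0 : (0:ℝ) < p := by linarith
  refine ⟨min (1/2) ((p-1)/2), lt_min (by norm_num) (by linarith), fun z₁ z₂ => ?_⟩
  have ha := norm_nonneg z₁
  have hb := norm_nonneg z₂
  have hs : abs (⟪z₁, z₂⟫) ≤ ‖z₁‖ * ‖z₂‖ := abs_real_inner_le_norm z₁ z₂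
  have hVsq : ∀ z : E n, ‖V p z‖ ^ (2:ℕ) = ‖z‖ ^ p := by
    intro z
    simp only [V]
    rw [norm_smul, Real.norm_eq_abs, abs_of_nonneg (Real.rpow_nonneg (norm_nonneg z) _),
      id3 hp0 (norm_nonneg z), hsq (norm_nonneg z)]
  have hnorm : ‖V p z₁ - V p z₂‖ ^ ((2:ℝ))
      = ‖z₁‖ ^ p + ‖z₂‖ ^ p
        - 2 * (‖z₁‖ ^ ((p-2)/2) * ‖z₂‖ ^ ((p-2)/2)) * ⟪z₁, z₂⟫ := by
    rw [show ((2:ℝ)) = ((2:ℕ):ℝ) by norm_num, Real.rpow_natCast, norm_sub_sq_real]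
    have hVi : ⟪V p z₁, V p z₂⟫
        = ‖z₁‖ ^ ((p-2)/2) * (‖z₂‖ ^ ((p-2)/2) * ⟪z₁, z₂⟫) := by
      simp only [V]
      rw [real_inner_smul_left, real_inner_smul_right]
    rw [hVsq z₁, hVsq z₂, hVi]
    ring
  have hinner : (inner ℝ z₁ (z₂ - z₁) : ℝ) = ⟪z₁, z₂⟫ - ‖z₁‖ ^ (2:ℕ) := by
    rw [inner_sub_right, real_inner_self_eq_norm_sq]
  rw [hnorm, hinner]
  exact scalar_main hp ha hb hs
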